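/- arXiv:2410.20143 — 9 statements merged into one kernel-verified Lean document; each statement's English description precedes it below -/
import Mathlib

section
/- Let I = (N, P, c, b, (A_i)_{i∈N}) be a PB instance under dichotomous preferences and let OPT = max_{S feasible} min_{i∈N} c(A_i ∩ S). Suppose x : P → ℝ satisfies 0 ≤ x_p ≤ 1 for all p, Σ_{p∈P} c(p)·x_p ≤ b, and OPT ≤ Σ_{p∈A_i} c(p)·x_p for every voter i (these conditions hold for an optimal solution of the LP relaxation of the maxmin integer program). Let S ⊆ P be any set with c(S) ≤ b such that c(p)·x_p ≥ c(p′)·x_{p′} for every p ∈ S and p′ ∈ P∖S (as produced by the Ordered-Relax greedy algorithm), let j be a voter minimizing c(A_i ∩ S) over i ∈ N, and assume S∖A_j ≠ ∅. Then c(A_j ∩ S) ≥ OPT − (|A_j∖S| / |S∖A_j|)·(b − OPT). -/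
/-!
Write `w p = c p * x p`. The LP value of voter `j` splits as `w(A_j ∩ S) + w(A_j ∖ S)`.
The first part is at most `c(A_j ∩ S)` since `x ≤ 1`. For the second, the greedy order
makes every `w`-value on `A_j ∖ S` at most every `w`-value on `S ∖ A_j`, so by averaging
`w(A_j ∖ S) ≤ |A_j ∖ S| / |S ∖ A_j| · w(S ∖ A_j)`; and `S ∖ A_j` is disjoint from `A_j`,
whose weight is at least `OPT`, so `w(S ∖ A_j) ≤ b - OPT` by the budget constraint of `x`.
-/

open Finset

namespace Finset

theorem card_nsmul_sum_le_card_nsmul_sum {ι M : Type*} [AddCommMonoid M] [PartialOrder M]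
    [IsOrderedAddMonoid M] {s t : Finset ι} {f : ι → M}
    (h : ∀ a ∈ s, ∀ b ∈ t, f a ≤ f b) :
    #t • ∑ a ∈ s, f a ≤ #s • ∑ b ∈ t, f b :=
  calc #t • ∑ a ∈ s, f a = ∑ a ∈ s, ∑ _b ∈ t, f a := by simp only [sum_const, smul_sum]
    _ ≤ ∑ a ∈ s, ∑ b ∈ t, f b := sum_le_sum fun a ha => sum_le_sum fun b hb => h a ha b hb
    _ = #s • ∑ b ∈ t, f b := sum_const _

theorem sum_le_card_div_card_mul_sum {ι K : Type*} [Field K] [LinearOrder K]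
    [IsStrictOrderedRing K] {s t : Finset ι} {f : ι → K}
    (h : ∀ a ∈ s, ∀ b ∈ t, f a ≤ f b) (ht : t.Nonempty) :
    ∑ a ∈ s, f a ≤ (#s : K) / #t * ∑ b ∈ t, f b := by
  have hcard := card_nsmul_sum_le_card_nsmul_sum h
  simp only [nsmul_eq_mul] at hcard
  rw [div_mul_eq_mul_div, le_div_iff₀ (by exact_mod_cast ht.card_pos), mul_comm]
  exact hcard

theorem sum_add_sum_le_sum_univ_of_disjoint {ι M : Type*} [Fintype ι] [AddCommMonoid M]
    [PartialOrder M] [IsOrderedAddMonoid M] {s t : Finset ι} {f : ι → M}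
    (hst : Disjoint s t) (hf : ∀ i, 0 ≤ f i) :
    ∑ i ∈ s, f i + ∑ i ∈ t, f i ≤ ∑ i, f i := by
  rw [← sum_disjUnion hst]
  exact sum_le_univ_sum_of_nonneg hf

end Finset

theorem stmt_1_general {N P : Type*} [Fintype P] [DecidableEq P]
    (c : P → ℕ) (b : ℕ) (A : N → Finset P)
    (OPT : ℕ)
    (x : P → ℝ) (hx0 : ∀ p, 0 ≤ x p) (hx1 : ∀ p, x p ≤ 1)
    (hxb : ∑ p : P, (c p : ℝ) * x p ≤ (b : ℝ))
    (hxOPT : ∀ i : N, (OPT : ℝ) ≤ ∑ p ∈ A i, (c p : ℝ) * x p)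
    (S : Finset P)
    (hgreedy : ∀ p ∈ S, ∀ p' ∉ S, (c p' : ℝ) * x p' ≤ (c p : ℝ) * x p)
    (j : N)
    (hSA : (S \ A j).Nonempty) :
    (OPT : ℝ) - ((A j \ S).card : ℝ) / ((S \ A j).card : ℝ) * ((b : ℝ) - (OPT : ℝ))
      ≤ ((∑ p ∈ A j ∩ S, c p : ℕ) : ℝ) := by
  set w : P → ℝ := fun p => c p * x p
  have hsplit : ∑ p ∈ A j ∩ S, w p + ∑ p ∈ A j \ S, w p = ∑ p ∈ A j, w p :=
    sum_inter_add_sum_sdiff _ _ _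
  have hkept : ∑ p ∈ A j ∩ S, w p ≤ ∑ p ∈ A j ∩ S, (c p : ℝ) :=
    sum_le_sum fun p _ => mul_le_of_le_one_right (Nat.cast_nonneg _) (hx1 p)
  have hdropped : ∑ p ∈ A j \ S, w p ≤ (#(A j \ S) : ℝ) / #(S \ A j) * ∑ p ∈ S \ A j, w p :=
    sum_le_card_div_card_mul_sum
      (fun p hp q hq => hgreedy q (mem_sdiff.1 hq).1 p (mem_sdiff.1 hp).2) hSA
  have hrest : ∑ p ∈ S \ A j, w p ≤ b - OPT := by
    have hbudget := sum_add_sum_le_sum_univ_of_disjoint (sdiff_disjoint : Disjoint (S \ A j) (A j))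
      (fun p => mul_nonneg (Nat.cast_nonneg (c p)) (hx0 p))
    linarith [hxOPT j]
  have hratio : (#(A j \ S) : ℝ) / #(S \ A j) * ∑ p ∈ S \ A j, w p
      ≤ (#(A j \ S) : ℝ) / #(S \ A j) * (b - OPT) :=
    mul_le_mul_of_nonneg_left hrest (by positivity)
  push_cast
  linarith [hxOPT j]

/-- Additive approximation guarantee of the Ordered-Relax algorithm for Maxmin PB:
if `x` is a feasible point of the LP relaxation with LP value at least `OPT`
(the optimal maxmin value), `S` is a feasible set consisting of projects with the
largest values `c p * x p` (as produced by Ordered-Relax), and `j` is a worst-off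
voter for `S` with `S \ A j ≠ ∅`, then
`c(A_j ∩ S) ≥ OPT − (|A_j∖S| / |S∖A_j|)·(b − OPT)`. -/
theorem stmt_1 {N P : Type*} [Fintype N] [Nonempty N] [Fintype P] [DecidableEq P]
    (c : P → ℕ) (hc : ∀ p, 0 < c p) (b : ℕ) (A : N → Finset P)
    (OPT : ℕ)
    (hOPT : IsGreatest
      {v : ℕ | ∃ S : Finset P, (∑ p ∈ S, c p) ≤ b ∧
        v = Finset.univ.inf' Finset.univ_nonempty (fun i : N => ∑ p ∈ A i ∩ S, c p)} OPT)
    (x : P → ℝ) (hx0 : ∀ p, 0 ≤ x p) (hx1 : ∀ p, x p ≤ 1)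
    (hxb : ∑ p : P, (c p : ℝ) * x p ≤ (b : ℝ))
    (hxOPT : ∀ i : N, (OPT : ℝ) ≤ ∑ p ∈ A i, (c p : ℝ) * x p)
    (S : Finset P) (hSb : (∑ p ∈ S, c p) ≤ b)
    (hgreedy : ∀ p ∈ S, ∀ p' ∉ S, (c p' : ℝ) * x p' ≤ (c p : ℝ) * x p)
    (j : N) (hj : ∀ i : N, ∑ p ∈ A j ∩ S, c p ≤ ∑ p ∈ A i ∩ S, c p)
    (hSA : (S \ A j).Nonempty) :
    (OPT : ℝ) - ((A j \ S).card : ℝ) / ((S \ A j).card : ℝ) * ((b : ℝ) - (OPT : ℝ))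
      ≤ ((∑ p ∈ A j ∩ S, c p : ℕ) : ℝ) :=
  stmt_1_general c b A OPT x hx0 hx1 hxb hxOPT S hgreedy j hSA
end

section
/- Fix a budget b ∈ ℕ with b ≥ 4 and b divisible by 4, a set P of 2b projects each of cost 1, and two voters. Let G be a PB algorithm mapping every dichotomous profile (A_1, A_2) of subsets of P to a single feasible set G(A_1, A_2) ⊆ P (so |G(A_1,A_2)| ≤ b), and suppose G is exhaustive (for every profile and every p ∉ G(A_1,A_2), |G(A_1,A_2)| + 1 > b) and strategy-proof (for each voter i ∈ {1,2}, every profile, and every alternative report A′_i ⊆ P, |A_i ∩ G(A_i, A_{−i})| ≥ |A_i ∩ G(A′_i, A_{−i})|). Then there exists a profile (A_1, A_2) of knapsack votes (|A_1| ≤ b and |A_2| ≤ b) such that min(|A_1 ∩ G(A_1,A_2)|, |A_2 ∩ G(A_1,A_2)|) ≤ (2/3) · max_{S ⊆ P, |S| ≤ b} min(|A_1 ∩ S|, |A_2 ∩ S|). Hence no exhaustive strategy-proof PB algorithm achieves an approximation guarantee better than 2/3 for the maxmin objective, even on instances with only knapsack votes and unit-cost projects. -/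
/-!
Split the projects into halves `A`, `Aᶜ` of size `b` and let `W := G A Aᶜ`, which has exactly `b`
elements by exhaustiveness. One half, say `A`, meets `W` in `x ≤ b / 2` projects. If voter 2's true
ballot is `W`, reporting `Aᶜ` already secures all of `W`, so strategy-proofness forces
`G A W = W`, where voter 1 gets only `x`. Yet taking `A ∩ W` together with half of the
`y = b - x` projects of `W \ A` and half of `A \ W` gives both voters at least `x + y / 2`,
and `3 x ≤ 2 (x + y / 2)` because `x ≤ y` (with `x ≠ y` when `y` is odd, as `4 ∣ b`).
-/

open Finset

lemma card_eq_of_exhaustive {α : Type*} [Fintype α] {b : ℕ} {W : Finset α} (hW : W.card ≤ b)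
    (hex : ∀ p, p ∉ W → b < W.card + 1) (hb : b ≤ Fintype.card α) : W.card = b := by
  by_cases huniv : W = univ
  · rw [huniv, card_univ] at hW ⊢; omega
  · obtain ⟨p, hp⟩ := not_forall.mp fun h => huniv (eq_univ_iff_forall.mpr h)
    have := hex p hp
    omega

lemma eq_of_card_le_card_inter {α : Type*} [DecidableEq α] {s t : Finset α}
    (h : s.card ≤ (s ∩ t).card) (ht : t.card ≤ s.card) : t = s :=
  (eq_of_subset_of_card_le
    (inter_eq_left.mp (eq_of_subset_of_card_le inter_subset_left h)) ht).symm

variable {α : Type*} [Fintype α] [DecidableEq α]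

def optimalMaxmin (b : ℕ) (A1 A2 : Finset α) : ℕ :=
  (univ.powerset.filter fun S => S.card ≤ b).sup fun S => min (A1 ∩ S).card (A2 ∩ S).card

lemma min_card_inter_le_optimalMaxmin {b : ℕ} (A1 A2 : Finset α) {S : Finset α}
    (hS : S.card ≤ b) : min (A1 ∩ S).card (A2 ∩ S).card ≤ optimalMaxmin b A1 A2 :=
  le_sup (f := fun S => min (A1 ∩ S).card (A2 ∩ S).card) (by simpa using hS)

lemma optimalMaxmin_comm (b : ℕ) (A1 A2 : Finset α) :
    optimalMaxmin b A1 A2 = optimalMaxmin b A2 A1 := by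
  simp only [optimalMaxmin, min_comm]

lemma card_inter_add_half_card_sdiff_le_optimalMaxmin {b : ℕ} {P Q : Finset α}
    (hQ : Q.card ≤ b) (hPQ : (Q \ P).card ≤ (P \ Q).card) :
    (P ∩ Q).card + (Q \ P).card / 2 ≤ optimalMaxmin b P Q := by
  set y := (Q \ P).card
  obtain ⟨SP, hSP, hSPcard⟩ := exists_subset_card_eq (s := P \ Q) (n := y - y / 2) (by omega)
  obtain ⟨SQ, hSQ, hSQcard⟩ := exists_subset_card_eq (s := Q \ P) (n := y / 2) (by omega)
  have hQsplit : (P ∩ Q).card + y = Q.card := by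
    rw [inter_comm]; exact card_inter_add_card_sdiff Q P
  set S := P ∩ Q ∪ SP ∪ SQ
  have hS : S.card ≤ b := by
    have : S.card ≤ (P ∩ Q ∪ SP).card + SQ.card := card_union_le _ _
    have := card_union_le (P ∩ Q) SP
    omega
  have hPS : (P ∩ Q).card + SP.card ≤ (P ∩ S).card := by
    rw [← card_union_of_disjoint ((disjoint_sdiff_inter P Q).symm.mono_right hSP)]
    refine card_le_card fun p hp => ?_
    have := @hSP p
    simp only [S, mem_union, mem_inter, mem_sdiff] at hp this ⊢
    tauto
  have hQS : (P ∩ Q).card + SQ.card ≤ (Q ∩ S).card := by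
    rw [← card_union_of_disjoint
      ((inter_comm P Q ▸ disjoint_sdiff_inter Q P).symm.mono_right hSQ)]
    refine card_le_card fun p hp => ?_
    have := @hSQ p
    simp only [S, mem_union, mem_inter, mem_sdiff] at hp this ⊢
    tauto
  exact le_trans (by omega) (min_card_inter_le_optimalMaxmin P Q hS)

lemma three_mul_card_inter_le_two_mul_optimalMaxmin {b : ℕ} {P Q : Finset α}
    (hP : P.card = b) (hQ : Q.card = b) (hb : 4 ∣ b) (hPQ : 2 * (P ∩ Q).card ≤ b) :
    3 * (P ∩ Q).card ≤ 2 * optimalMaxmin b P Q := by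
  have hQsplit : (P ∩ Q).card + (Q \ P).card = b := by
    rw [inter_comm, ← hQ]; exact card_inter_add_card_sdiff Q P
  have hPsplit : (P ∩ Q).card + (P \ Q).card = b := by
    rw [← hP]; exact card_inter_add_card_sdiff P Q
  have := card_inter_add_half_card_sdiff_le_optimalMaxmin (P := P) hQ.le (by omega)
  omega

lemma cast_le_two_thirds_mul {m n : ℕ} (h : 3 * m ≤ 2 * n) : (m : ℝ) ≤ 2 / 3 * n := by
  have : (3 * m : ℝ) ≤ 2 * n := by exact_mod_cast h
  linarith

theorem stmt_2_general (b : ℕ) (hdvd : 4 ∣ b)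
    (G : Finset (Fin (2 * b)) → Finset (Fin (2 * b)) → Finset (Fin (2 * b)))
    (hfeas : ∀ A1 A2, (G A1 A2).card ≤ b)
    (hexh : ∀ A1 A2, ∀ p, p ∉ G A1 A2 → b < (G A1 A2).card + 1)
    (hsp1 : ∀ A1 A2 A1', (A1 ∩ G A1' A2).card ≤ (A1 ∩ G A1 A2).card)
    (hsp2 : ∀ A1 A2 A2', (A2 ∩ G A1 A2').card ≤ (A2 ∩ G A1 A2).card) :
    ∃ A1 A2 : Finset (Fin (2 * b)), A1.card ≤ b ∧ A2.card ≤ b ∧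
      ((min (A1 ∩ G A1 A2).card (A2 ∩ G A1 A2).card : ℕ) : ℝ) ≤
        (2 / 3 : ℝ) *
          (((Finset.univ.powerset.filter fun S => S.card ≤ b).sup
            fun S => min (A1 ∩ S).card (A2 ∩ S).card : ℕ) : ℝ) := by
  obtain ⟨A, -, hA⟩ := exists_subset_card_eq (s := (univ : Finset (Fin (2 * b)))) (n := b)
    (by simp; omega)
  have hAc : Aᶜ.card = b := by simp [card_compl, hA]; omega
  obtain ⟨W, hGW⟩ : ∃ W, G A Aᶜ = W := ⟨_, rfl⟩
  have hW : W.card = b := hGW ▸ card_eq_of_exhaustive (hfeas A Aᶜ) (hexh A Aᶜ) (by simp; omega)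
  have hsplit : (A ∩ W).card + (Aᶜ ∩ W).card = b := by
    rw [inter_comm A, inter_comm Aᶜ, ← sdiff_eq_inter_compl, card_inter_add_card_sdiff, hW]
  rcases le_or_gt (2 * (A ∩ W).card) b with h | h
  · have hfix : G A W = W :=
      eq_of_card_le_card_inter (by simpa only [hGW, inter_self] using hsp2 A W Aᶜ)
        ((hfeas A W).trans hW.ge)
    refine ⟨A, W, hA.le, hW.le, ?_⟩
    rw [hfix, inter_self, min_eq_left (card_le_card inter_subset_right)]
    exact cast_le_two_thirds_mul (three_mul_card_inter_le_two_mul_optimalMaxmin hA hW hdvd h)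
  · have hfix : G W Aᶜ = W :=
      eq_of_card_le_card_inter (by simpa only [hGW, inter_self] using hsp1 W Aᶜ A)
        ((hfeas W Aᶜ).trans hW.ge)
    refine ⟨W, Aᶜ, hW.le, hAc.le, ?_⟩
    rw [hfix, inter_self, min_eq_right (card_le_card inter_subset_right)]
    have hbound := three_mul_card_inter_le_two_mul_optimalMaxmin hAc hW hdvd (by omega)
    rw [optimalMaxmin_comm] at hbound
    exact cast_le_two_thirds_mul hbound

/-- No exhaustive, strategy-proof PB algorithm achieves an approximation guarantee better
than `2/3` for the maxmin objective, even for instances with only knapsack votes and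
unit-cost projects: with budget `b ≥ 4` divisible by `4` and `2b` unit-cost projects,
for every exhaustive strategy-proof algorithm `G` there is a profile of knapsack votes
on which the maxmin value of the output is at most `2/3` of the optimal maxmin value. -/
theorem stmt_2 (b : ℕ) (hb : 4 ≤ b) (hdvd : 4 ∣ b)
    (G : Finset (Fin (2 * b)) → Finset (Fin (2 * b)) → Finset (Fin (2 * b)))
    (hfeas : ∀ A1 A2, (G A1 A2).card ≤ b)
    (hexh : ∀ A1 A2, ∀ p, p ∉ G A1 A2 → b < (G A1 A2).card + 1)
    (hsp1 : ∀ A1 A2 A1', (A1 ∩ G A1' A2).card ≤ (A1 ∩ G A1 A2).card)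
    (hsp2 : ∀ A1 A2 A2', (A2 ∩ G A1 A2').card ≤ (A2 ∩ G A1 A2).card) :
    ∃ A1 A2 : Finset (Fin (2 * b)), A1.card ≤ b ∧ A2.card ≤ b ∧
      ((min (A1 ∩ G A1 A2).card (A2 ∩ G A1 A2).card : ℕ) : ℝ) ≤
        (2 / 3 : ℝ) *
          (((Finset.univ.powerset.filter fun S => S.card ≤ b).sup
            fun S => min (A1 ∩ S).card (A2 ∩ S).card : ℕ) : ℝ) :=
  stmt_2_general b hdvd G hfeas hexh hsp1 hsp2
end

section
/- The MPB rule satisfies splitting monotonicity: let I = (N, P, c, b, (A_i)) be a PB instance and x ∈ W(I) a winning project. Form the instance I′ by splitting x into a nonempty set X of new projects (disjoint from P) with positive costs summing to c(x), setting P′ = (P∖{x}) ∪ X, keeping N, b, and the costs of all other projects unchanged, and setting A′_i = (A_i∖{x}) ∪ X if x ∈ A_i and A′_i = A_i otherwise. Then X ∩ W(I′) ≠ ∅, i.e., at least one of the new projects wins in I′. -/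
variable {N U : Type*}

/-- Total cost of a set of projects. -/
def costOf [DecidableEq U] (c : U → ℕ) (S : Finset U) : ℕ := ∑ p ∈ S, c p

/-- The minimum utility of a voter, where the utility of voter `i` from `S` is the
total cost of the approved projects of `i` in `S`. -/
def minUtil [Fintype N] [Nonempty N] [DecidableEq U] (c : U → ℕ) (A : N → Finset U)
    (S : Finset U) : ℕ :=
  Finset.univ.inf' Finset.univ_nonempty fun i : N => costOf c (A i ∩ S)

/-- `S` is selected by the Maxmin Participatory Budgeting (MPB) rule for the instance
with project set `Pr`, costs `c`, budget `b`, and approval profile `A`. -/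
def MPBsel [Fintype N] [Nonempty N] [DecidableEq U] (Pr : Finset U) (c : U → ℕ) (b : ℕ)
    (A : N → Finset U) (S : Finset U) : Prop :=
  S ⊆ Pr ∧ costOf c S ≤ b ∧
    ∀ T : Finset U, T ⊆ Pr → costOf c T ≤ b → minUtil c A T ≤ minUtil c A S

/-- Project `p` wins, i.e., belongs to some set selected by MPB. -/
def winsIn [Fintype N] [Nonempty N] [DecidableEq U] (Pr : Finset U) (c : U → ℕ) (b : ℕ)
    (A : N → Finset U) (p : U) : Prop :=
  ∃ S : Finset U, MPBsel Pr c b A S ∧ p ∈ S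

/-! Let `S ∋ x` be selected in the original instance and `T` in the split one. If `T` meets `X`
we are done. Otherwise `T` avoids `x` and `X`, so it is feasible in the original instance with the
same utilities, hence `minUtil T ≤ minUtil S`. Replacing `x` by `X` in `S` keeps its cost and does
not decrease any utility, so `(S \ {x}) ∪ X` is selected in the split instance and meets `X`. -/

section Basic

variable [DecidableEq U]

theorem costOf_mono (c : U → ℕ) {S T : Finset U} (h : S ⊆ T) : costOf c S ≤ costOf c T :=
  Finset.sum_le_sum_of_subset h

theorem costOf_congr {c c' : U → ℕ} {S : Finset U} (h : ∀ p ∈ S, c' p = c p) :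
    costOf c' S = costOf c S :=
  Finset.sum_congr rfl h

variable [Fintype N] [Nonempty N]

theorem minUtil_le_minUtil {c c' : U → ℕ} {A A' : N → Finset U} {S S' : Finset U}
    (h : ∀ i, costOf c (A i ∩ S) ≤ costOf c' (A' i ∩ S')) :
    minUtil c A S ≤ minUtil c' A' S' :=
  Finset.le_inf' _ _ fun i _ => (Finset.inf'_le _ (Finset.mem_univ i)).trans (h i)

theorem exists_MPBsel (Pr : Finset U) (c : U → ℕ) (b : ℕ) (A : N → Finset U) :
    ∃ S, MPBsel Pr c b A S := by
  obtain ⟨S, hS, hmax⟩ := Finset.exists_max_image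
    (Pr.powerset.filter fun T => costOf c T ≤ b) (minUtil c A)
    ⟨∅, Finset.mem_filter.mpr ⟨Finset.empty_mem_powerset _, by simp [costOf]⟩⟩
  simp only [Finset.mem_filter, Finset.mem_powerset] at hS hmax
  exact ⟨S, hS.1, hS.2, fun T hT hTb => hmax T ⟨hT, hTb⟩⟩

theorem MPBsel.of_minUtil_le {Pr : Finset U} {c : U → ℕ} {b : ℕ} {A : N → Finset U}
    {S T : Finset U} (hS : MPBsel Pr c b A S) (hT : T ⊆ Pr) (hTb : costOf c T ≤ b)
    (hle : minUtil c A S ≤ minUtil c A T) : MPBsel Pr c b A T :=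
  ⟨hT, hTb, fun R hR hRb => (hS.2.2 R hR hRb).trans hle⟩

end Basic

section Split

variable [DecidableEq U] {Pr X : Finset U} {c c' : U → ℕ} {x : U}

theorem costOf_split_of_subset (hc'old : ∀ p ∈ Pr, p ≠ x → c' p = c p) {T : Finset U}
    (hT : T ⊆ Pr \ {x}) : costOf c' T = costOf c T :=
  costOf_congr fun p hp => by
    obtain ⟨hpPr, hpx⟩ := Finset.mem_sdiff.mp (hT hp)
    exact hc'old p hpPr (by simpa using hpx)

theorem costOf_split (hXdisj : Disjoint X Pr) (hc'old : ∀ p ∈ Pr, p ≠ x → c' p = c p)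
    (hc'sum : ∑ p ∈ X, c' p = c x) {S : Finset U} (hS : S ⊆ Pr) (hxS : x ∈ S) :
    costOf c' ((S \ {x}) ∪ X) = costOf c S := by
  have hdisj : Disjoint (S \ {x}) X :=
    (hXdisj.mono_right (Finset.sdiff_subset.trans hS)).symm
  rw [costOf, Finset.sum_union hdisj, ← costOf,
    costOf_split_of_subset hc'old (Finset.sdiff_subset_sdiff hS le_rfl), hc'sum, costOf,
    costOf, ← Finset.sum_eq_sum_sdiff_singleton_add hxS]

variable [Fintype N] [Nonempty N] {A A' : N → Finset U}

theorem minUtil_split_of_subset (hXdisj : Disjoint X Pr)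
    (hc'old : ∀ p ∈ Pr, p ≠ x → c' p = c p)
    (hA' : ∀ i : N, A' i = if x ∈ A i then (A i \ {x}) ∪ X else A i)
    {T : Finset U} (hT : T ⊆ Pr \ {x}) : minUtil c' A' T = minUtil c A T := by
  have hTX : Disjoint T X := (hXdisj.mono_right (hT.trans Finset.sdiff_subset)).symm
  have hinter : ∀ i, A' i ∩ T = A i ∩ T := by
    intro i
    rw [hA' i]
    split_ifs
    · ext p
      have hpX : p ∈ T → p ∉ X := fun hp => Finset.disjoint_left.mp hTX hp
      have hpx : p ∈ T → p ∈ Pr \ {x} := fun hp => hT hp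
      simp only [Finset.mem_inter, Finset.mem_union, Finset.mem_sdiff,
        Finset.mem_singleton] at hpX hpx ⊢
      tauto
    · rfl
  refine Finset.inf'_congr _ rfl fun i _ => ?_
  rw [hinter, costOf_split_of_subset hc'old (Finset.inter_subset_right.trans hT)]

theorem minUtil_le_minUtil_split (hXdisj : Disjoint X Pr)
    (hc'old : ∀ p ∈ Pr, p ≠ x → c' p = c p) (hc'sum : ∑ p ∈ X, c' p = c x)
    (hA' : ∀ i : N, A' i = if x ∈ A i then (A i \ {x}) ∪ X else A i)
    {S : Finset U} (hS : S ⊆ Pr) (hxS : x ∈ S) :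
    minUtil c A S ≤ minUtil c' A' ((S \ {x}) ∪ X) := by
  refine minUtil_le_minUtil fun i => ?_
  rw [hA' i]
  split_ifs with hxA
  · calc costOf c (A i ∩ S)
        = costOf c' (((A i ∩ S) \ {x}) ∪ X) :=
          (costOf_split hXdisj hc'old hc'sum (Finset.inter_subset_right.trans hS)
            (Finset.mem_inter.mpr ⟨hxA, hxS⟩)).symm
      _ ≤ costOf c' (((A i \ {x}) ∪ X) ∩ ((S \ {x}) ∪ X)) := costOf_mono c' fun p => by
          simp only [Finset.mem_inter, Finset.mem_union, Finset.mem_sdiff]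
          tauto
  · have hsub : A i ∩ S ⊆ Pr \ {x} := fun p hp => by
      obtain ⟨hpA, hpS⟩ := Finset.mem_inter.mp hp
      exact Finset.mem_sdiff.mpr ⟨hS hpS, fun h => hxA (Finset.mem_singleton.mp h ▸ hpA)⟩
    calc costOf c (A i ∩ S) = costOf c' (A i ∩ S) := (costOf_split_of_subset hc'old hsub).symm
      _ ≤ costOf c' (A i ∩ ((S \ {x}) ∪ X)) := costOf_mono c' fun p => by
          simp only [Finset.mem_inter, Finset.mem_union, Finset.mem_sdiff, Finset.mem_singleton]
          rintro ⟨hpA, hpS⟩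
          exact ⟨hpA, Or.inl ⟨hpS, by rintro rfl; exact hxA hpA⟩⟩

end Split

theorem stmt_3_general [Fintype N] [Nonempty N] [DecidableEq U]
    (Pr : Finset U) (c : U → ℕ) (b : ℕ) (A : N → Finset U)
    (x : U) (hx : winsIn Pr c b A x)
    (X : Finset U) (hXne : X.Nonempty) (hXdisj : Disjoint X Pr)
    (c' : U → ℕ)
    (hc'old : ∀ p ∈ Pr, p ≠ x → c' p = c p)
    (hc'sum : ∑ p ∈ X, c' p = c x)
    (A' : N → Finset U)
    (hA' : ∀ i : N, A' i = if x ∈ A i then (A i \ {x}) ∪ X else A i) :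
    ∃ p ∈ X, winsIn ((Pr \ {x}) ∪ X) c' b A' p := by
  obtain ⟨S, hS, hxS⟩ := hx
  obtain ⟨T, hT⟩ := exists_MPBsel ((Pr \ {x}) ∪ X) c' b A'
  by_cases hTX : Disjoint T X
  swap
  · obtain ⟨p, hpT, hpX⟩ := Finset.not_disjoint_iff.mp hTX
    exact ⟨p, hpX, T, hT, hpT⟩
  have hTPr : T ⊆ Pr \ {x} := fun p hp =>
    (Finset.mem_union.mp (hT.1 hp)).resolve_right (Finset.disjoint_left.mp hTX hp)
  have hTb : costOf c T ≤ b := costOf_split_of_subset hc'old hTPr ▸ hT.2.1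
  have hle : minUtil c' A' T ≤ minUtil c' A' ((S \ {x}) ∪ X) := calc
    minUtil c' A' T = minUtil c A T := minUtil_split_of_subset hXdisj hc'old hA' hTPr
    _ ≤ minUtil c A S := hS.2.2 T (hTPr.trans Finset.sdiff_subset) hTb
    _ ≤ minUtil c' A' ((S \ {x}) ∪ X) :=
      minUtil_le_minUtil_split hXdisj hc'old hc'sum hA' hS.1 hxS
  have hS' : MPBsel ((Pr \ {x}) ∪ X) c' b A' ((S \ {x}) ∪ X) :=
    hT.of_minUtil_le (Finset.union_subset_union (Finset.sdiff_subset_sdiff hS.1 le_rfl) le_rfl)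
      ((costOf_split hXdisj hc'old hc'sum hS.1 hxS).symm ▸ hS.2.1) hle
  obtain ⟨p, hpX⟩ := hXne
  exact ⟨p, hpX, _, hS', Finset.mem_union_right _ hpX⟩

/-- Splitting monotonicity of MPB: if a winning project `x` is split into a nonempty set
`X` of new projects with positive costs summing to `c x`, and `x` is replaced by `X` in
every approval set containing it, then some project of `X` wins in the new instance. -/
theorem stmt_3 [Fintype N] [Nonempty N] [DecidableEq U]
    (Pr : Finset U) (c : U → ℕ) (b : ℕ) (A : N → Finset U)
    (hc : ∀ p ∈ Pr, 0 < c p) (hA : ∀ i : N, A i ⊆ Pr)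
    (x : U) (hx : winsIn Pr c b A x)
    (X : Finset U) (hXne : X.Nonempty) (hXdisj : Disjoint X Pr)
    (c' : U → ℕ)
    (hc'old : ∀ p ∈ Pr, p ≠ x → c' p = c p)
    (hc'pos : ∀ p ∈ X, 0 < c' p)
    (hc'sum : ∑ p ∈ X, c' p = c x)
    (A' : N → Finset U)
    (hA' : ∀ i : N, A' i = if x ∈ A i then (A i \ {x}) ∪ X else A i) :
    ∃ p ∈ X, winsIn ((Pr \ {x}) ∪ X) c' b A' p :=
  stmt_3_general Pr c b A x hx X hXne hXdisj c' hc'old hc'sum A' hA'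
end

section
/- The MPB rule satisfies merging monotonicity: let I = (N, P, c, b, (A_i)) be a PB instance, S ∈ MPB(I), and P′ ⊆ S a nonempty set of winning projects such that A_i ∩ P′ ∈ {P′, ∅} for every voter i. Form I′ by merging P′ into a single new project p with c(p) = c(P′): replace the projects P′ by {p} in the project set, and replace P′ by {p} in every approval set A_i with P′ ⊆ A_i (other approval sets, N, b, and all other costs are unchanged). Then p ∈ W(I′). -/
/-! Undoing the merge, i.e. replacing `p` by the projects of `P'`, maps every subset of the merged
instance to a subset of the original one with the same total cost and, because each voter approves
either all of `P'` or none of it, with the same utility for every voter. It maps `(S \ P') ∪ {p}`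
back to `S`, so the optimality of `S` is inherited by that set, which contains `p`. -/

variable {N U : Type*}

theorem MPBsel_of_map [Fintype N] [Nonempty N] [DecidableEq U] {Pr Pr' : Finset U}
    {c c' : U → ℕ} {b : ℕ} {A A' : N → Finset U} (f : Finset U → Finset U)
    (hf_sub : ∀ T ⊆ Pr', f T ⊆ Pr) (hf_cost : ∀ T ⊆ Pr', costOf c (f T) = costOf c' T)
    (hf_util : ∀ T ⊆ Pr', minUtil c A (f T) = minUtil c' A' T)
    {S : Finset U} (hS : S ⊆ Pr') (hfS : MPBsel Pr c b A (f S)) :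
    MPBsel Pr' c' b A' S := by
  refine ⟨hS, hf_cost S hS ▸ hfS.2.1, fun T hT hTb => ?_⟩
  rw [← hf_util T hT, ← hf_util S hS]
  exact hfS.2.2 _ (hf_sub T hT) (by rwa [hf_cost T hT])

section Unmerge

variable [DecidableEq U] {P' T X Y : Finset U} {p : U}

def unmerge (P' : Finset U) (p : U) (T : Finset U) : Finset U :=
  if p ∈ T then T.erase p ∪ P' else T

def merge (P' : Finset U) (p : U) (Y : Finset U) : Finset U :=
  if P' ⊆ Y then (Y \ P') ∪ {p} else Y

theorem unmerge_inter (hX : Disjoint X P') (hY : Disjoint Y P') :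
    unmerge P' p (X ∩ Y) = unmerge P' p X ∩ unmerge P' p Y := by
  have hqX := Finset.disjoint_left.mp hX
  have hqY := Finset.disjoint_left.mp hY
  ext q
  by_cases hpX : p ∈ X <;> by_cases hpY : p ∈ Y <;> rcases eq_or_ne q p with rfl | hqp <;>
    simp_all [unmerge]
  tauto

theorem unmerge_subset {Pr : Finset U} (hT : T ⊆ (Pr \ P') ∪ {p}) (hP' : P' ⊆ Pr) :
    unmerge P' p T ⊆ Pr := by
  rw [Finset.union_singleton, Finset.subset_insert_iff] at hT
  unfold unmerge
  split_ifs with hpT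
  · exact Finset.union_subset (hT.trans Finset.sdiff_subset) hP'
  · exact (Finset.erase_eq_of_notMem hpT ▸ hT).trans Finset.sdiff_subset

theorem costOf_unmerge {c c' : U → ℕ} (hT : Disjoint T P') (hc : ∀ q ∈ T, q ≠ p → c' q = c q)
    (hcp : c' p = costOf c P') : costOf c (unmerge P' p T) = costOf c' T := by
  unfold unmerge costOf
  split_ifs with hpT
  · have hdisj : Disjoint (T.erase p) P' := hT.mono_left (Finset.erase_subset p T)
    rw [Finset.sum_union hdisj, ← Finset.add_sum_erase T c' hpT, hcp, add_comm, costOf]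
    congr 1
    exact Finset.sum_congr rfl fun q hq => (hc q (Finset.mem_of_mem_erase hq)
      (Finset.ne_of_mem_erase hq)).symm
  · exact Finset.sum_congr rfl fun q hq => (hc q hq (ne_of_mem_of_not_mem hq hpT)).symm

theorem unmerge_merge (hpY : p ∉ Y) : unmerge P' p (merge P' p Y) = Y := by
  unfold merge
  split_ifs with hP'Y
  · rw [unmerge, if_pos (by simp), Finset.union_singleton,
      Finset.erase_insert fun h => hpY (Finset.mem_sdiff.mp h).1, Finset.sdiff_union_of_subset hP'Y]
  · rw [unmerge, if_neg hpY]

theorem disjoint_sdiff_union_singleton (hp : p ∉ P') : Disjoint ((Y \ P') ∪ {p}) P' :=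
  Finset.disjoint_union_left.mpr ⟨Finset.sdiff_disjoint, Finset.disjoint_singleton_left.mpr hp⟩

theorem disjoint_merge (hp : p ∉ P') (hY : Y ∩ P' = P' ∨ Y ∩ P' = ∅) :
    Disjoint (merge P' p Y) P' := by
  unfold merge
  split_ifs with hP'Y
  · exact disjoint_sdiff_union_singleton hp
  · rcases hY with hY | hY
    · exact absurd (hY ▸ Finset.inter_subset_left) hP'Y
    · exact Finset.disjoint_iff_inter_eq_empty.mpr hY

theorem minUtil_unmerge [Fintype N] [Nonempty N] {c c' : U → ℕ} {A A' : N → Finset U}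
    (hA : ∀ i, unmerge P' p (A' i) = A i) (hA' : ∀ i, Disjoint (A' i) P') (hT : Disjoint T P')
    (hc : ∀ q ∈ T, q ≠ p → c' q = c q) (hcp : c' p = costOf c P') :
    minUtil c A (unmerge P' p T) = minUtil c' A' T := by
  refine Finset.inf'_congr _ rfl fun i _ => ?_
  calc costOf c (A i ∩ unmerge P' p T)
      = costOf c (unmerge P' p (A' i ∩ T)) := by rw [unmerge_inter (hA' i) hT, hA i]
    _ = costOf c' (A' i ∩ T) :=
      costOf_unmerge (hT.mono_left Finset.inter_subset_right)
        (fun q hq => hc q (Finset.mem_inter.mp hq).2) hcp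

end Unmerge

theorem stmt_4_general [Fintype N] [Nonempty N] [DecidableEq U]
    (Pr : Finset U) (c : U → ℕ) (b : ℕ) (A : N → Finset U)
    (hA : ∀ i : N, A i ⊆ Pr)
    (S : Finset U) (hS : MPBsel Pr c b A S)
    (P' : Finset U) (hP'S : P' ⊆ S)
    (hsame : ∀ i : N, A i ∩ P' = P' ∨ A i ∩ P' = ∅)
    (p : U) (hp : p ∉ Pr)
    (c' : U → ℕ)
    (hc'old : ∀ q ∈ Pr, q ∉ P' → c' q = c q)
    (hc'p : c' p = costOf c P')
    (A' : N → Finset U)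
    (hA' : ∀ i : N, A' i = if P' ⊆ A i then (A i \ P') ∪ {p} else A i) :
    winsIn ((Pr \ P') ∪ {p}) c' b A' p := by
  have hpP' : p ∉ P' := fun h => hp (hS.1 (hP'S h))
  have hdisj : ∀ T ⊆ (Pr \ P') ∪ {p}, Disjoint T P' := fun T hT =>
    Finset.disjoint_of_subset_left hT (disjoint_sdiff_union_singleton hpP')
  have hagree : ∀ T ⊆ (Pr \ P') ∪ {p}, ∀ q ∈ T, q ≠ p → c' q = c q := fun T hT q hqT hqp => by
    obtain ⟨hqPr, hqP'⟩ : q ∈ Pr ∧ q ∉ P' := by simpa [hqp] using hT hqT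
    exact hc'old q hqPr hqP'
  have hA'merge : ∀ i, A' i = merge P' p (A i) := hA'
  refine ⟨merge P' p S, MPBsel_of_map (unmerge P' p)
    (fun T hT => unmerge_subset hT (hP'S.trans hS.1))
    (fun T hT => costOf_unmerge (hdisj T hT) (hagree T hT) hc'p)
    (fun T hT => minUtil_unmerge (fun i => by rw [hA'merge, unmerge_merge fun h => hp (hA i h)])
      (fun i => hA'merge i ▸ disjoint_merge hpP' (hsame i)) (hdisj T hT) (hagree T hT) hc'p)
    ?_ ?_, ?_⟩
  · rw [merge, if_pos hP'S]
    exact Finset.union_subset_union (Finset.sdiff_subset_sdiff hS.1 le_rfl) le_rfl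
  · rwa [unmerge_merge fun h => hp (hS.1 h)]
  · simp [merge, hP'S]

/-- Merging monotonicity of MPB: if the projects of a nonempty set `P' ⊆ S` of winning
projects (where `S` is MPB-selected), approved by exactly the same voters, are merged
into a single new project `p` of cost `c(P')`, then `p` wins in the new instance. -/
theorem stmt_4 [Fintype N] [Nonempty N] [DecidableEq U]
    (Pr : Finset U) (c : U → ℕ) (b : ℕ) (A : N → Finset U)
    (hc : ∀ q ∈ Pr, 0 < c q) (hA : ∀ i : N, A i ⊆ Pr)
    (S : Finset U) (hS : MPBsel Pr c b A S)
    (P' : Finset U) (hP'S : P' ⊆ S) (hP'ne : P'.Nonempty)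
    (hsame : ∀ i : N, A i ∩ P' = P' ∨ A i ∩ P' = ∅)
    (p : U) (hp : p ∉ Pr)
    (c' : U → ℕ)
    (hc'old : ∀ q ∈ Pr, q ∉ P' → c' q = c q)
    (hc'p : c' p = costOf c P')
    (A' : N → Finset U)
    (hA' : ∀ i : N, A' i = if P' ⊆ A i then (A i \ P') ∪ {p} else A i) :
    winsIn ((Pr \ P') ∪ {p}) c' b A' p :=
  stmt_4_general Pr c b A hA S hS P' hP'S hsame p hp c' hc'old hc'p A' hA'
end

section
/- The rule R_{‖·‖} (the distance-disutility minimizing PB rule for projects with multiple permissible costs) is range-abiding and range-unanimous. Range-abidingness: for every instance, every allocation x selected by R_{‖·‖} (i.e., minimizing total disutility among valid allocations), and every project j with τ_j ≠ ∅, we have x_j ≤ τ̄_j. Range-unanimity: if τ_j ≠ ∅ for every project j and Σ_j τ̄_j ≤ b, then the allocation (τ̄_1, …, τ̄_m) is selected by R_{‖·‖}. -/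
variable {N : Type*}

/-- A valid budget allocation: each project gets one of its permissible costs, and the
total allocated amount is within the budget. -/
def validAlloc {m : ℕ} (C : Fin m → Finset ℕ) (b : ℕ) (x : Fin m → ℕ) : Prop :=
  (∀ j, x j ∈ C j) ∧ ∑ j, x j ≤ b

/-- Distance disutility of voter `i` at allocation `x`, given reported bounds `lo`, `hi`. -/
def distDisutil {m : ℕ} (lo hi : N → Fin m → ℕ) (i : N) (x : Fin m → ℕ) : ℕ :=
  ∑ j, (if x j < lo i j then lo i j - x j else if x j ≤ hi i j then 0 else x j - hi i j)

/-- The rule `R_{‖·‖}` selects exactly the valid allocations minimizing total distance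
disutility. -/
def selectedDist [Fintype N] {m : ℕ} (C : Fin m → Finset ℕ) (b : ℕ)
    (lo hi : N → Fin m → ℕ) (x : Fin m → ℕ) : Prop :=
  validAlloc C b x ∧ ∀ y : Fin m → ℕ, validAlloc C b y →
    ∑ i : N, distDisutil lo hi i x ≤ ∑ i : N, distDisutil lo hi i y

/-- The set `τ_j` of unanimously approved costs of project `j`. -/
def unanimousCosts [Fintype N] {m : ℕ} (C : Fin m → Finset ℕ) (lo hi : N → Fin m → ℕ)
    (j : Fin m) : Finset ℕ :=
  (C j).filter fun v => ∀ i : N, lo i j ≤ v ∧ v ≤ hi i j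

/-!
Range-abidingness: if a selected allocation overshoots `τ̄_j`, lowering project `j` to `τ̄_j`
stays within budget and makes project `j` cost nothing to every voter, while some voter
disapproves of the overshooting cost `x_j ∉ τ_j`; so total disutility strictly drops.
Range-unanimity: at `(τ̄_1, …, τ̄_m)` every voter has disutility `0`.
-/

open Function

def intervalDist (l h v : ℕ) : ℕ :=
  if v < l then l - v else if v ≤ h then 0 else v - h

lemma intervalDist_eq_zero_iff {l h v : ℕ} : intervalDist l h v = 0 ↔ l ≤ v ∧ v ≤ h := by
  unfold intervalDist
  split_ifs <;> omega

section

variable {m : ℕ} {C : Fin m → Finset ℕ} {b : ℕ} {lo hi : N → Fin m → ℕ}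

lemma distDisutil_eq_sum_intervalDist (i : N) (x : Fin m → ℕ) :
    distDisutil lo hi i x = ∑ j, intervalDist (lo i j) (hi i j) (x j) :=
  rfl

lemma validAlloc.update_of_le {x : Fin m → ℕ} (hx : validAlloc C b x) {j : Fin m} {v : ℕ}
    (hvC : v ∈ C j) (hv : v ≤ x j) : validAlloc C b (update x j v) := by
  refine ⟨fun j' => ?_, ?_⟩
  · rcases eq_or_ne j' j with rfl | hj'
    · simpa using hvC
    · simpa [hj'] using hx.1 j'
  · calc ∑ j', update x j v j' ≤ ∑ j', x j' :=
          Finset.sum_le_sum fun j' _ => update_le_self_iff.2 hv j'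
      _ ≤ b := hx.2

lemma intervalDist_update_le {i : N} {j : Fin m} {v : ℕ} (hv : lo i j ≤ v ∧ v ≤ hi i j)
    (x : Fin m → ℕ) (j' : Fin m) :
    intervalDist (lo i j') (hi i j') (update x j v j') ≤
      intervalDist (lo i j') (hi i j') (x j') := by
  rcases eq_or_ne j' j with rfl | hj'
  · simp [intervalDist_eq_zero_iff.2 hv]
  · simp [hj']

lemma distDisutil_update_le {i : N} {j : Fin m} {v : ℕ} (hv : lo i j ≤ v ∧ v ≤ hi i j)
    (x : Fin m → ℕ) : distDisutil lo hi i (update x j v) ≤ distDisutil lo hi i x := by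
  simp only [distDisutil_eq_sum_intervalDist]
  exact Finset.sum_le_sum fun j' _ => intervalDist_update_le hv x j'

lemma distDisutil_update_lt {i : N} {j : Fin m} {v : ℕ} (hv : lo i j ≤ v ∧ v ≤ hi i j)
    {x : Fin m → ℕ} (hx : ¬(lo i j ≤ x j ∧ x j ≤ hi i j)) :
    distDisutil lo hi i (update x j v) < distDisutil lo hi i x := by
  simp only [distDisutil_eq_sum_intervalDist]
  refine Finset.sum_lt_sum (fun j' _ => intervalDist_update_le hv x j')
    ⟨j, Finset.mem_univ _, ?_⟩
  rw [update_self, intervalDist_eq_zero_iff.2 hv]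
  exact Nat.pos_of_ne_zero (mt intervalDist_eq_zero_iff.1 hx)

variable [Fintype N]

lemma mem_unanimousCosts {j : Fin m} {v : ℕ} :
    v ∈ unanimousCosts C lo hi j ↔ v ∈ C j ∧ ∀ i, lo i j ≤ v ∧ v ≤ hi i j :=
  Finset.mem_filter

lemma selectedDist.le_max'_unanimousCosts {x : Fin m → ℕ} (hx : selectedDist C b lo hi x)
    (j : Fin m) (hne : (unanimousCosts C lo hi j).Nonempty) :
    x j ≤ (unanimousCosts C lo hi j).max' hne := by
  set τ := (unanimousCosts C lo hi j).max' hne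
  by_contra! hτx
  obtain ⟨hτC, hτ⟩ := mem_unanimousCosts.1 (Finset.max'_mem _ hne)
  have hx_not_mem : x j ∉ unanimousCosts C lo hi j := fun h => hτx.not_ge (Finset.le_max' _ _ h)
  obtain ⟨i₀, hi₀⟩ : ∃ i₀, ¬(lo i₀ j ≤ x j ∧ x j ≤ hi i₀ j) := by
    simpa [mem_unanimousCosts, hx.1.1 j] using hx_not_mem
  have hlt : ∑ i, distDisutil lo hi i (update x j τ) < ∑ i, distDisutil lo hi i x :=
    Finset.sum_lt_sum (fun i _ => distDisutil_update_le (hτ i) x)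
      ⟨i₀, Finset.mem_univ _, distDisutil_update_lt (hτ i₀) hi₀⟩
  exact hlt.not_ge (hx.2 _ (hx.1.update_of_le hτC hτx.le))

lemma selectedDist_of_forall_mem_interval {x : Fin m → ℕ} (hx : validAlloc C b x)
    (hxlh : ∀ i j, lo i j ≤ x j ∧ x j ≤ hi i j) : selectedDist C b lo hi x := by
  have hzero : ∀ i, distDisutil lo hi i x = 0 := fun i =>
    Finset.sum_eq_zero fun j _ => intervalDist_eq_zero_iff.2 (hxlh i j)
  exact ⟨hx, fun y _ => by simp [hzero]⟩

end

theorem stmt_10_general [Fintype N] {m : ℕ}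
    (C : Fin m → Finset ℕ) (b : ℕ)
    (lo hi : N → Fin m → ℕ) :
    (∀ x : Fin m → ℕ, selectedDist C b lo hi x →
      ∀ (j : Fin m) (hne : (unanimousCosts C lo hi j).Nonempty),
        x j ≤ (unanimousCosts C lo hi j).max' hne) ∧
    (∀ hne : ∀ j, (unanimousCosts C lo hi j).Nonempty,
      (∑ j, (unanimousCosts C lo hi j).max' (hne j)) ≤ b →
        selectedDist C b lo hi fun j => (unanimousCosts C lo hi j).max' (hne j)) := by
  refine ⟨fun x hx => hx.le_max'_unanimousCosts, fun hne hb => ?_⟩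
  have hmem j := mem_unanimousCosts.1 (Finset.max'_mem _ (hne j))
  exact selectedDist_of_forall_mem_interval ⟨fun j => (hmem j).1, hb⟩ fun i j => (hmem j).2 i

/-- The distance-disutility minimizing rule `R_{‖·‖}` is range-abiding and
range-unanimous. -/
theorem stmt_10 [Fintype N] [Nonempty N] {m : ℕ}
    (C : Fin m → Finset ℕ) (hC0 : ∀ j, 0 ∈ C j) (b : ℕ)
    (lo hi : N → Fin m → ℕ)
    (hlC : ∀ i j, lo i j ∈ C j) (hhC : ∀ i j, hi i j ∈ C j)
    (hlh : ∀ i j, lo i j ≤ hi i j) :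
    (∀ x : Fin m → ℕ, selectedDist C b lo hi x →
      ∀ (j : Fin m) (hne : (unanimousCosts C lo hi j).Nonempty),
        x j ≤ (unanimousCosts C lo hi j).max' hne) ∧
    (∀ hne : ∀ j, (unanimousCosts C lo hi j).Nonempty,
      (∑ j, (unanimousCosts C lo hi j).max' (hne j)) ≤ b →
        selectedDist C b lo hi fun j => (unanimousCosts C lo hi j).max' (hne j)) :=
  stmt_10_general C b lo hi
end

section
/- The PB-CC rule satisfies discount monotonicity: let I be a PB instance under weakly ordinal preferences, and let x ∈ W(I) with c(x) ≥ 2. Let I′ be obtained from I by reducing the cost of x by 1 (all else unchanged). Then x ∈ W(I′). -/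
/-!
PB-CC selects the nonempty feasible sets maximizing a score that does not depend on costs,
so only the feasibility constraint changes. Take a set `T` that is optimal after the discount.
If `x ∉ T`, then `T` costs the same as before, so it was feasible and scores at most as much
as the old optimal set `S ∋ x`; and `S` is still feasible, hence still optimal.
-/

open Classical in
/-- The rank of project `p` for a voter with weak order `R`: one plus the number of
projects strictly preferred to `p`. -/
noncomputable def rankOf {P : Type*} [Fintype P] (R : P → P → Prop) (p : P) : ℕ :=
  1 + (Finset.univ.filter fun q => R q p ∧ ¬ R p q).card

/-- The minimum rank (for preference `R`) of a project in `S`; `Fintype.card P` if `S`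
is empty. -/
noncomputable def minRank {P : Type*} [Fintype P] (R : P → P → Prop) (S : Finset P) : ℕ :=
  if h : S.Nonempty then S.inf' h (rankOf R) else Fintype.card P

/-- The Chamberlin–Courant score of `S`: `Σ_i (m − min_{p∈S} r_i(p))`. -/
noncomputable def ccScore {N P : Type*} [Fintype N] [Fintype P]
    (R : N → P → P → Prop) (S : Finset P) : ℕ :=
  ∑ i : N, (Fintype.card P - minRank (R i) S)

/-- `S` is selected by the PB-CC rule: it is a nonempty feasible set maximizing the
Chamberlin–Courant score among nonempty feasible sets. -/
def PBCCsel {N P : Type*} [Fintype N] [Fintype P] (c : P → ℕ) (b : ℕ)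
    (R : N → P → P → Prop) (S : Finset P) : Prop :=
  S.Nonempty ∧ (∑ p ∈ S, c p) ≤ b ∧
    ∀ T : Finset P, T.Nonempty → (∑ p ∈ T, c p) ≤ b → ccScore R T ≤ ccScore R S

/-- Project `p` wins under PB-CC: it belongs to some selected set. -/
def winsCC {N P : Type*} [Fintype N] [Fintype P] (c : P → ℕ) (b : ℕ)
    (R : N → P → P → Prop) (p : P) : Prop :=
  ∃ S : Finset P, PBCCsel c b R S ∧ p ∈ S

namespace Finset

variable {P α : Type*} [LinearOrder α]

def IsFeasible (c : P → ℕ) (b : ℕ) (S : Finset P) : Prop :=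
  S.Nonempty ∧ ∑ p ∈ S, c p ≤ b

def IsBestFeasible (c : P → ℕ) (b : ℕ) (f : Finset P → α) (S : Finset P) : Prop :=
  S.IsFeasible c b ∧ ∀ T : Finset P, T.IsFeasible c b → f T ≤ f S

theorem exists_isBestFeasible [Fintype P] {c : P → ℕ} {b : ℕ} (f : Finset P → α)
    {S : Finset P} (hS : S.IsFeasible c b) : ∃ T : Finset P, T.IsBestFeasible c b f := by
  classical
  obtain ⟨T, hT, hTmax⟩ :=
    (univ.filter (IsFeasible c b)).exists_max_image f ⟨S, (mem_filter_univ S).2 hS⟩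
  exact ⟨T, (mem_filter_univ T).1 hT, fun U hU => hTmax U ((mem_filter_univ U).2 hU)⟩

theorem IsFeasible.of_le {c c' : P → ℕ} {b : ℕ} {S : Finset P} (hS : S.IsFeasible c b)
    (hc : c' ≤ c) : S.IsFeasible c' b :=
  ⟨hS.1, (sum_le_sum fun p _ => hc p).trans hS.2⟩

theorem IsFeasible.of_eqOn {c c' : P → ℕ} {b : ℕ} {S : Finset P} (hS : S.IsFeasible c' b)
    (hc : ∀ p ∈ S, c' p = c p) : S.IsFeasible c b :=
  ⟨hS.1, (sum_congr rfl hc).symm.trans_le hS.2⟩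

theorem IsBestFeasible.exists_mem_of_discount [Fintype P] {c c' : P → ℕ} {b : ℕ}
    {f : Finset P → α} {S : Finset P} {x : P} (hS : S.IsBestFeasible c b f) (hxS : x ∈ S)
    (hle : c' ≤ c) (hc_ne : ∀ p ≠ x, c' p = c p) :
    ∃ S' : Finset P, S'.IsBestFeasible c' b f ∧ x ∈ S' := by
  obtain ⟨T, hT⟩ := exists_isBestFeasible f (hS.1.of_le hle)
  by_cases hxT : x ∈ T
  · exact ⟨T, hT, hxT⟩
  have hTS : f T ≤ f S :=
    hS.2 T (hT.1.of_eqOn fun p hp => hc_ne p (ne_of_mem_of_not_mem hp hxT))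
  exact ⟨S, ⟨hS.1.of_le hle, fun U hU => (hT.2 U hU).trans hTS⟩, hxS⟩

end Finset

theorem pbccSel_iff_isBestFeasible {N P : Type*} [Fintype N] [Fintype P] {c : P → ℕ} {b : ℕ}
    {R : N → P → P → Prop} {S : Finset P} :
    PBCCsel c b R S ↔ S.IsBestFeasible c b (ccScore R) := by
  simp only [PBCCsel, Finset.IsBestFeasible, Finset.IsFeasible, and_imp, and_assoc]

theorem stmt_13_general {N P : Type*} [Fintype N] [Fintype P] [DecidableEq P]
    (c : P → ℕ) (b : ℕ)
    (R : N → P → P → Prop)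
    (x : P) (hx : winsCC c b R x) :
    winsCC (Function.update c x (c x - 1)) b R x := by
  obtain ⟨S, hS, hxS⟩ := hx
  obtain ⟨S', hS', hxS'⟩ := (pbccSel_iff_isBestFeasible.1 hS).exists_mem_of_discount hxS
    (update_le_self_iff.2 (Nat.sub_le _ _)) fun p hp => Function.update_of_ne hp _ _
  exact ⟨S', pbccSel_iff_isBestFeasible.2 hS', hxS'⟩

/-- Discount monotonicity of the PB-CC rule: a winning project of cost at least 2 keeps
winning after its cost is reduced by 1. -/
theorem stmt_13 {N P : Type*} [Fintype N] [Nonempty N] [Fintype P] [DecidableEq P]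
    (c : P → ℕ) (hc : ∀ p, 0 < c p) (b : ℕ)
    (R : N → P → P → Prop)
    (htotal : ∀ i p q, R i p q ∨ R i q p)
    (htrans : ∀ i, Transitive (R i))
    (hafford : ∃ p, c p ≤ b)
    (x : P) (hx : winsCC c b R x) (hcx : 2 ≤ c x) :
    winsCC (Function.update c x (c x - 1)) b R x :=
  stmt_13_general c b R x hx
end

section
/- The PB-CC rule satisfies candidate monotonicity: let I be a PB instance under weakly ordinal preferences and x ∈ W(I). Let i be a voter, let E^i_1 ≻_i E^i_2 ≻_i ⋯ be the indifference classes of ⪰_i, suppose x ∈ E^i_j for some j ≥ 2 and x′ ∈ E^i_{j−1}, and let I′ be obtained from I by exchanging the positions of x and x′ in ⪰_i (all other voters' preferences, costs, and budget unchanged). Then x ∈ W(I′). -/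
open Function

section Ranks

variable {P : Type*} [Fintype P]

lemma rankOf_le_rankOf {R : P → P → Prop} (htrans : Transitive R) {a b : P} (hab : R a b) :
    rankOf R a ≤ rankOf R b := by
  unfold rankOf
  refine Nat.add_le_add_left (Finset.card_le_card fun q => ?_) 1
  simp only [Finset.mem_filter, Finset.mem_univ, true_and]
  exact fun ⟨hqa, hnaq⟩ => ⟨htrans hqa hab, fun hbq => hnaq (htrans hab hbq)⟩

lemma rankOf_onFun_perm (R : P → P → Prop) (σ : Equiv.Perm P) (p : P) :
    rankOf (R on σ) p = rankOf R (σ p) := by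
  unfold rankOf
  congr 1
  refine Finset.card_bij (fun q _ => σ q) ?_ (fun _ _ _ _ h => σ.injective h) ?_
  · simp [Function.onFun]
  · intro q hq
    exact ⟨σ.symm q, by simpa [Function.onFun] using hq, σ.apply_symm_apply q⟩

lemma minRank_le_minRank {R R' : P → P → Prop} {T : Finset P}
    (h : ∀ p ∈ T, ∃ q ∈ T, rankOf R' q ≤ rankOf R p) : minRank R' T ≤ minRank R T := by
  unfold minRank
  split_ifs with hT
  · refine Finset.le_inf' hT _ fun p hp => ?_
    obtain ⟨q, hq, hqp⟩ := h p hp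
    exact (Finset.inf'_le _ hq).trans hqp
  · exact le_rfl

variable [DecidableEq P] {R : P → P → Prop} {x x' : P}

lemma minRank_le_minRank_swap_of_notMem (htrans : Transitive R) (hx'x : R x' x)
    {T : Finset P} (hxT : x ∉ T) : minRank R T ≤ minRank (R on Equiv.swap x x') T := by
  refine minRank_le_minRank fun p hp => ⟨p, hp, ?_⟩
  rw [rankOf_onFun_perm]
  by_cases hpx' : p = x'
  · subst hpx'
    rw [Equiv.swap_apply_right]
    exact rankOf_le_rankOf htrans hx'x
  · rw [Equiv.swap_apply_of_ne_of_ne (ne_of_mem_of_not_mem hp hxT) hpx']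

lemma minRank_swap_le_of_mem (htrans : Transitive R) (hx'x : R x' x)
    {T : Finset P} (hxT : x ∈ T) : minRank (R on Equiv.swap x x') T ≤ minRank R T := by
  refine minRank_le_minRank fun p hp => ?_
  simp only [rankOf_onFun_perm]
  by_cases hpx : p = x
  · subst hpx
    exact ⟨p, hp, by rw [Equiv.swap_apply_left]; exact rankOf_le_rankOf htrans hx'x⟩
  by_cases hpx' : p = x'
  · subst hpx'
    exact ⟨x, hxT, by rw [Equiv.swap_apply_left]⟩
  · exact ⟨p, hp, by rw [Equiv.swap_apply_of_ne_of_ne hpx hpx']⟩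

end Ranks

section Selection

variable {N P : Type*} [Fintype N] [Fintype P] {c : P → ℕ} {b : ℕ}

lemma ccScore_le_ccScore {R R' : N → P → P → Prop} {T : Finset P}
    (h : ∀ k, minRank (R k) T ≤ minRank (R' k) T) : ccScore R' T ≤ ccScore R T :=
  Finset.sum_le_sum fun k _ => Nat.sub_le_sub_left (h k) _

lemma exists_PBCCsel (R : N → P → P → Prop) {S : Finset P} (hS : S.Nonempty)
    (hSb : ∑ p ∈ S, c p ≤ b) : ∃ S', PBCCsel c b R S' := by
  classical
  obtain ⟨S', hS'mem, hS'max⟩ :=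
    Finset.exists_max_image ({T | T.Nonempty ∧ ∑ p ∈ T, c p ≤ b} : Finset (Finset P))
      (ccScore R) ⟨S, by simp [hS, hSb]⟩
  simp only [Finset.mem_filter, Finset.mem_univ, true_and] at hS'mem hS'max
  exact ⟨S', hS'mem.1, hS'mem.2, fun T hT hTb => hS'max T ⟨hT, hTb⟩⟩

theorem winsCC_of_ccScore_shift {R R' : N → P → P → Prop} {x : P} (hx : winsCC c b R x)
    (hout : ∀ T, x ∉ T → ccScore R' T ≤ ccScore R T)
    (hin : ∀ T, x ∈ T → ccScore R T ≤ ccScore R' T) : winsCC c b R' x := by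
  obtain ⟨S₀, ⟨hS₀, hS₀b, hS₀max⟩, hxS₀⟩ := hx
  obtain ⟨S, hSsel⟩ := exists_PBCCsel (c := c) R' hS₀ hS₀b
  by_cases hxS : x ∈ S
  · exact ⟨S, hSsel, hxS⟩
  refine ⟨S₀, ⟨hS₀, hS₀b, fun T hT hTb => ?_⟩, hxS₀⟩
  calc ccScore R' T ≤ ccScore R' S := hSsel.2.2 T hT hTb
    _ ≤ ccScore R S := hout S hxS
    _ ≤ ccScore R S₀ := hS₀max S hSsel.1 hSsel.2.1
    _ ≤ ccScore R' S₀ := hin S₀ hxS₀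

end Selection

theorem stmt_14_general {N P : Type*} [Fintype N] [Fintype P] [DecidableEq P]
    (c : P → ℕ) (b : ℕ)
    (R : N → P → P → Prop)
    (htrans : ∀ i, Transitive (R i))
    (x : P) (hx : winsCC c b R x)
    (i : N) (x' : P)
    (hstrict : R i x' x ∧ ¬ R i x x')
    (R' : N → P → P → Prop)
    (hR'i : ∀ p q, R' i p q ↔ R i (Equiv.swap x x' p) (Equiv.swap x x' q))
    (hR'other : ∀ k, k ≠ i → R' k = R k) :
    winsCC c b R' x := by
  replace hR'i : R' i = (R i on Equiv.swap x x') := funext₂ fun p q => propext (hR'i p q)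
  refine winsCC_of_ccScore_shift hx (fun T hxT => ccScore_le_ccScore fun k => ?_)
    (fun T hxT => ccScore_le_ccScore fun k => ?_)
  · obtain rfl | hk := eq_or_ne k i
    · rw [hR'i]; exact minRank_le_minRank_swap_of_notMem (htrans k) hstrict.1 hxT
    · rw [hR'other k hk]
  · obtain rfl | hk := eq_or_ne k i
    · rw [hR'i]; exact minRank_swap_le_of_mem (htrans k) hstrict.1 hxT
    · rw [hR'other k hk]

/-- Candidate monotonicity of the PB-CC rule: if a winning project `x` is exchanged, in
the preference of a single voter `i`, with a project `x'` lying in the indifference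
class immediately above the class of `x`, then `x` still wins in the new instance. -/
theorem stmt_14 {N P : Type*} [Fintype N] [Nonempty N] [Fintype P] [DecidableEq P]
    (c : P → ℕ) (hc : ∀ p, 0 < c p) (b : ℕ)
    (R : N → P → P → Prop)
    (htotal : ∀ i p q, R i p q ∨ R i q p)
    (htrans : ∀ i, Transitive (R i))
    (hafford : ∃ p, c p ≤ b)
    (x : P) (hx : winsCC c b R x)
    (i : N) (x' : P)
    (hstrict : R i x' x ∧ ¬ R i x x')
    (hadj : ∀ z : P, ¬ ((R i x' z ∧ ¬ R i z x') ∧ (R i z x ∧ ¬ R i x z)))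
    (R' : N → P → P → Prop)
    (hR'i : ∀ p q, R' i p q ↔ R i (Equiv.swap x x' p) (Equiv.swap x x' q))
    (hR'other : ∀ k, k ≠ i → R' k = R k) :
    winsCC c b R' x :=
  stmt_14_general c b R htrans x hx i x' hstrict R' hR'i hR'other
end

section
/- The PB-CC rule does not satisfy limit monotonicity: there exists a PB instance I under weakly ordinal preferences in which no project costs exactly b+1 and a project x ∈ W(I) such that x ∉ W(I′), where I′ is obtained from I by increasing the budget to b+1. (For instance, take b = 1, three projects of unit cost each, and two voters with opposite strict rankings: the middle project wins at budget 1 but loses at budget 2.) -/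
/-! With two voters ranking the projects `0, …, m` in opposite orders, the Chamberlin–Courant
score of a nonempty set `S` is `m - min S + max S`. With unit costs and budget `1` every singleton
scores `m`, so every project wins; with budget `2` the optimal sets are exactly those containing
both `0` and `m`, which leaves no room for an interior project. -/

section LinearOrder

variable {P : Type*} [Fintype P] [LinearOrder P]

theorem rankOf_le [LocallyFiniteOrderBot P] (p : P) :
    rankOf (· ≤ ·) p = 1 + (Finset.Iio p).card := by
  classical
  simp only [rankOf, not_le, and_iff_right_of_imp le_of_lt]
  rw [Finset.filter_gt_eq_Iio]

theorem rankOf_ge [LocallyFiniteOrderTop P] (p : P) :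
    rankOf (fun p q => q ≤ p) p = 1 + (Finset.Ioi p).card := by
  classical
  simp only [rankOf, not_le, and_iff_right_of_imp le_of_lt]
  rw [Finset.filter_lt_eq_Ioi]

theorem minRank_eq_of_monotone {R : P → P → Prop} (h : Monotone (rankOf R))
    {S : Finset P} (hS : S.Nonempty) : minRank R S = rankOf R (S.min' hS) := by
  rw [minRank, dif_pos hS, Finset.min'_eq_inf', Finset.apply_inf'_eq_inf'_comp hS _
    fun _ _ => h.map_min]
  rfl

theorem minRank_eq_of_antitone {R : P → P → Prop} (h : Antitone (rankOf R))
    {S : Finset P} (hS : S.Nonempty) : minRank R S = rankOf R (S.max' hS) := by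
  rw [minRank, dif_pos hS]
  exact le_antisymm (Finset.inf'_le _ (S.max'_mem hS))
    (Finset.le_inf' _ _ fun p hp => h (S.le_max' p hp))

end LinearOrder

namespace OppositeRankings

variable {m : ℕ}

/-- `voters i p q` reads `p ⪰_i q`: voter `0` ranks the projects by increasing index, voter `1`
by decreasing index. -/
def voters : Fin 2 → Fin (m + 1) → Fin (m + 1) → Prop :=
  ![fun p q => p ≤ q, fun p q => q ≤ p]

theorem voters_total (i : Fin 2) (p q : Fin (m + 1)) : voters i p q ∨ voters i q p := by
  fin_cases i <;> exact le_total _ _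

theorem voters_transitive (i : Fin 2) : Transitive (voters (m := m) i) := by
  fin_cases i
  · exact fun _ _ _ => le_trans
  · exact fun _ _ _ h₁ h₂ => le_trans h₂ h₁

theorem rankOf_voters_zero (p : Fin (m + 1)) : rankOf (voters 0) p = 1 + p := by
  rw [voters, Matrix.cons_val_zero, rankOf_le, Fin.card_Iio]

theorem rankOf_voters_one (p : Fin (m + 1)) : rankOf (voters 1) p = 1 + (m - p) := by
  rw [voters, Matrix.cons_val_one, Matrix.cons_val_zero, rankOf_ge, Fin.card_Ioi,
    Nat.add_sub_cancel]

theorem ccScore_voters {S : Finset (Fin (m + 1))} (hS : S.Nonempty) :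
    ccScore voters S = m - S.min' hS + S.max' hS := by
  have h₀ : Monotone (rankOf (voters (m := m) 0)) := fun p q hpq => by
    simp only [rankOf_voters_zero]; omega
  have h₁ : Antitone (rankOf (voters (m := m) 1)) := fun p q hpq => by
    simp only [rankOf_voters_one]; omega
  have hmax := (S.max' hS).is_le
  rw [ccScore, Fin.sum_univ_two, minRank_eq_of_monotone h₀ hS, minRank_eq_of_antitone h₁ hS,
    rankOf_voters_zero, rankOf_voters_one, Fintype.card_fin]
  omega

theorem ccScore_voters_singleton (p : Fin (m + 1)) : ccScore voters {p} = m := by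
  rw [ccScore_voters (Finset.singleton_nonempty p), Finset.min'_singleton, Finset.max'_singleton]
  omega

theorem two_mul_le_ccScore_voters_iff {S : Finset (Fin (m + 1))} (hS : S.Nonempty) :
    2 * m ≤ ccScore voters S ↔ 0 ∈ S ∧ Fin.last m ∈ S := by
  rw [ccScore_voters hS]
  have hmax := (S.max' hS).is_le
  constructor
  · intro h
    have hmin : S.min' hS = 0 := Fin.ext (by simp only [Fin.val_zero]; omega)
    have hlast : S.max' hS = Fin.last m := Fin.ext (by simp only [Fin.val_last]; omega)
    exact ⟨hmin ▸ S.min'_mem hS, hlast ▸ S.max'_mem hS⟩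
  · rintro ⟨h0, hlast⟩
    have hmin := S.min'_le 0 h0
    have hmax' := S.le_max' _ hlast
    simp only [Fin.le_iff_val_le_val, Fin.val_zero, Fin.val_last] at hmin hmax'
    omega

theorem winsCC_budget_one (x : Fin (m + 1)) : winsCC (fun _ => 1) 1 voters x := by
  refine ⟨{x}, ⟨Finset.singleton_nonempty x, by simp, fun T hT hcost => ?_⟩,
    Finset.mem_singleton_self x⟩
  obtain ⟨p, rfl⟩ := Finset.card_eq_one.mp (le_antisymm (by simpa using hcost) hT.card_pos)
  rw [ccScore_voters_singleton, ccScore_voters_singleton]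

theorem not_winsCC_budget_two {x : Fin (m + 1)} (h0 : x ≠ 0) (hlast : x ≠ Fin.last m) :
    ¬ winsCC (fun _ => 1) 2 voters x := by
  rintro ⟨S, ⟨hS, hcost, hmax⟩, hx⟩
  have hends : (0 : Fin (m + 1)) ∈ S ∧ Fin.last m ∈ S := by
    have hpair : ({0, Fin.last m} : Finset (Fin (m + 1))).Nonempty := Finset.insert_nonempty _ _
    rw [← two_mul_le_ccScore_voters_iff hS]
    calc 2 * m ≤ ccScore voters {0, Fin.last m} :=
          (two_mul_le_ccScore_voters_iff hpair).mpr (by simp)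
      _ ≤ ccScore voters S := hmax _ hpair (by simpa using Finset.card_le_two)
  have h0last : (0 : Fin (m + 1)) ≠ Fin.last m :=
    fun h => h0 (Fin.le_zero_iff.mp (h ▸ x.le_last))
  have hcard : S.card ≤ 2 := by simpa using hcost
  have : 2 < S.card :=
    Finset.two_lt_card.mpr ⟨0, hends.1, x, hx, _, hends.2, h0.symm, h0last, hlast⟩
  omega

end OppositeRankings

/-- The PB-CC rule does not satisfy limit monotonicity: there is an instance in which no
project costs exactly `b+1` and a winning project that no longer wins when the budget is
increased to `b+1`. -/
theorem stmt_16 :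
    ∃ (n m : ℕ) (c : Fin (m + 1) → ℕ) (b : ℕ)
      (R : Fin (n + 1) → Fin (m + 1) → Fin (m + 1) → Prop),
      (∀ p, 0 < c p) ∧
      (∀ i p q, R i p q ∨ R i q p) ∧
      (∀ i, Transitive (R i)) ∧
      (∃ p, c p ≤ b) ∧
      (∀ p, c p ≠ b + 1) ∧
      ∃ x, winsCC c b R x ∧ ¬ winsCC c (b + 1) R x :=
  ⟨1, 2, fun _ => 1, 1, OppositeRankings.voters, fun _ => one_pos,
    OppositeRankings.voters_total, OppositeRankings.voters_transitive, ⟨0, le_rfl⟩,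
    fun _ => by norm_num, 1, OppositeRankings.winsCC_budget_one 1,
    OppositeRankings.not_winsCC_budget_two (by decide) (by decide)⟩
end

section
/- Let φ be a median rule with parameters p_1 = β_0 ⊴ β_1 ⊴ ⋯ ⊴ β_{n−1} ⊴ β_n = p_m, mapping each profile P_N ∈ D^n to the median (the (n+1)-st smallest with respect to ◁) of the list of 2n+1 projects (≻_1(1), …, ≻_n(1), β_0, β_1, …, β_n). Let P_N ∈ D^n be a single-peaked profile, i a voter, κ_i ∈ {1,…,m}, and r = |{j ∈ N : ≻_j(1) ⊴ ≻_i(1)}|. If [β_{n−r}, β_{n−r+1}] ∩ U(≻_i(κ_i), ≻_i) ≠ ∅, then φ(P_N) ∈ U(≻_i(κ_i), ≻_i). -/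
/-! The outcome `c` of the median rule lies between voter `i`'s peak `t` and `p` in the prior
order. Indeed, at least `r` tops and the `n - r + 1` parameters `β_0, …, β_{n-r}` are
`⊴ max t p`, while at least `n - r + 1` tops (those weakly above `t`) and the `r` parameters
`β_{n-r+1}, …, β_n` are `⊵ min t p`; either way more than half of the `2n + 1` points.
Single-peakedness then ranks `c` weakly above `p`, which lies in the upper contour set. -/

/-- Projects `p_1 ◁ ⋯ ◁ p_{m+1}`, identified with `Fin (m+1)` with its natural order. -/
abbrev Proj (m : ℕ) := Fin (m + 1)

/-- A preference (strict linear order) over the projects, encoded as a permutation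
sending each project to its rank position (position `0` = top). -/
abbrev Pref (m : ℕ) := Equiv.Perm (Proj m)

/-- The top-ranked project of a preference. -/
def topOf {m : ℕ} (r : Pref m) : Proj m := r.symm 0

/-- Single-peakedness of a preference with respect to the prior order `◁` on projects. -/
def SinglePeaked {m : ℕ} (r : Pref m) : Prop :=
  ∀ p q : Proj m, ((topOf r < p ∧ p < q) ∨ (q < p ∧ p < topOf r)) → r p < r q

/-- The median rule with parameters `β_0 ⊴ ⋯ ⊴ β_n`: the outcome at a profile is the
`(n+1)`-st smallest (w.r.t. `◁`) of the `2n+1` projects consisting of the `n` voters'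
top-ranked projects together with the `n+1` parameters. -/
def medianRule {n m : ℕ} (β : Fin (n + 1) → Proj m)
    (prof : Fin n → Pref m) : Proj m :=
  (Multiset.sort
      ((Finset.univ.val.map fun i => topOf (prof i)) + Finset.univ.val.map β) (· ≤ ·)).getD n 0

namespace List

variable {α : Type*} [LinearOrder α] {l : List α}

theorem Pairwise.getElem_le_of_mem_drop (hl : l.Pairwise (· ≤ ·)) {k : ℕ} (hk : k < l.length)
    {x : α} (hx : x ∈ l.drop k) : l[k] ≤ x := by
  have hd := hl.drop (i := k)
  rw [drop_eq_getElem_cons hk] at hx hd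
  rcases mem_cons.1 hx with rfl | hx
  · rfl
  · exact rel_of_pairwise_cons hd hx

theorem Pairwise.getElem_le_of_lt_countP (hl : l.Pairwise (· ≤ ·)) {k : ℕ} (hk : k < l.length)
    {M : α} (h : k < l.countP (· ≤ M)) : l[k] ≤ M := by
  by_contra! hM
  have hdrop : (l.drop k).countP (· ≤ M) = 0 :=
    countP_eq_zero.2 fun x hx => by simpa using hM.trans_le (hl.getElem_le_of_mem_drop hk hx)
  have : l.countP (· ≤ M) ≤ k := by
    rw [← take_append_drop k l, countP_append, hdrop, add_zero]
    exact countP_le_length.trans (length_take_le _ _)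
  omega

theorem Pairwise.le_getElem_of_length_le_add_countP (hl : l.Pairwise (· ≤ ·)) {k : ℕ}
    (hk : k < l.length) {L : α} (h : l.length ≤ k + l.countP (L ≤ ·)) : L ≤ l[k] := by
  -- the mirror image of `getElem_le_of_lt_countP`: reverse the list and dualize the order
  have hl' : (l.reverse.map OrderDual.toDual).Pairwise (· ≤ ·) := by
    simpa [pairwise_map, pairwise_reverse] using hl
  have := hl'.getElem_le_of_lt_countP (k := l.length - 1 - k) (M := OrderDual.toDual L)
    (by simp; omega) (by simp [countP_map, countP_reverse, Function.comp_def]; omega)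
  have e : l.length - 1 - (l.length - 1 - k) = k := by omega
  simpa [getElem_reverse, e] using this

end List

namespace Multiset

variable {α : Type*} [LinearOrder α] (s : Multiset α) {k : ℕ} (d : α)

theorem getD_sort_le_of_lt_countP {M : α} (h : k < s.countP (· ≤ M)) :
    (s.sort (· ≤ ·)).getD k d ≤ M := by
  have hk : k < (s.sort (· ≤ ·)).length := by
    rw [length_sort]; exact h.trans_le (countP_le_card _ _)
  rw [List.getD_eq_getElem _ _ hk]
  refine (pairwise_sort s _).getElem_le_of_lt_countP hk ?_
  rwa [← coe_countP, sort_eq]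

theorem le_getD_sort_of_card_le_add_countP {L : α} (hk : k < card s)
    (h : card s ≤ k + s.countP (L ≤ ·)) : L ≤ (s.sort (· ≤ ·)).getD k d := by
  have hk' : k < (s.sort (· ≤ ·)).length := by rwa [length_sort]
  rw [List.getD_eq_getElem _ _ hk']
  refine (pairwise_sort s _).le_getElem_of_length_le_add_countP hk' ?_
  rwa [← coe_countP, sort_eq, length_sort]

end Multiset

theorem Fintype.card_lt_card_filter_le_add_card_filter_ge {ι α : Type*} [Fintype ι]
    [DecidableEq ι] [LinearOrder α] (f : ι → α) (i : ι) :
    Fintype.card ι < (Finset.univ.filter fun j => f j ≤ f i).card +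
      (Finset.univ.filter fun j => f i ≤ f j).card := by
  rw [← Finset.card_union_add_card_inter]
  have hunion : (Finset.univ.filter fun j => f j ≤ f i) ∪
      (Finset.univ.filter fun j => f i ≤ f j) = Finset.univ := by
    ext j; simp [le_total]
  have hinter : 0 < ((Finset.univ.filter fun j => f j ≤ f i) ∩
      (Finset.univ.filter fun j => f i ≤ f j)).card :=
    Finset.card_pos.2 ⟨i, by simp⟩
  rw [hunion, Finset.card_univ]
  omega

namespace Monotone

variable {N : ℕ} {α : Type*} [Preorder α] [DecidableLE α] {f : Fin N → α}

theorem val_add_one_le_card_filter_le (hf : Monotone f) (a : Fin N) {M : α} (ha : f a ≤ M) :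
    a.val + 1 ≤ (Finset.univ.filter fun k => f k ≤ M).card := by
  rw [← Fin.card_Iic]
  exact Finset.card_le_card fun k hk => by simpa using (hf (Finset.mem_Iic.1 hk)).trans ha

theorem sub_val_le_card_filter_ge (hf : Monotone f) (a : Fin N) {L : α} (ha : L ≤ f a) :
    N - a.val ≤ (Finset.univ.filter fun k => L ≤ f k).card := by
  rw [← Fin.card_Ici]
  exact Finset.card_le_card fun k hk => by simpa using ha.trans (hf (Finset.mem_Ici.1 hk))

end Monotone

theorem SinglePeaked.apply_le_of_mem_uIcc {m : ℕ} {pref : Pref m} (h : SinglePeaked pref)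
    {c p : Proj m} (hc : c ∈ Set.uIcc (topOf pref) p) : pref c ≤ pref p := by
  rcases eq_or_ne c p with rfl | hcp
  · rfl
  rcases eq_or_ne c (topOf pref) with rfl | hct
  · simp [topOf]
  refine (h c p ?_).le
  rcases Set.mem_uIcc.1 hc with ⟨h₁, h₂⟩ | ⟨h₁, h₂⟩
  · exact Or.inl ⟨lt_of_le_of_ne h₁ hct.symm, lt_of_le_of_ne h₂ hcp⟩
  · exact Or.inr ⟨lt_of_le_of_ne h₁ hcp.symm, lt_of_le_of_ne h₂ hct⟩

section MedianRule

variable {n m : ℕ} (β : Fin (n + 1) → Proj m) (prof : Fin n → Pref m)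

theorem countP_tops_add_params (q : Proj m → Prop) [DecidablePred q] :
    ((Finset.univ.val.map fun j => topOf (prof j)) + Finset.univ.val.map β).countP q =
      (Finset.univ.filter fun j => q (topOf (prof j))).card +
        (Finset.univ.filter fun k => q (β k)).card := by
  rw [Multiset.countP_add, Multiset.countP_map, Multiset.countP_map]
  rfl

theorem medianRule_le {M : Proj m}
    (h : n < (Finset.univ.filter fun j => topOf (prof j) ≤ M).card +
      (Finset.univ.filter fun k => β k ≤ M).card) :
    medianRule β prof ≤ M := by
  apply Multiset.getD_sort_le_of_lt_countP
  rwa [countP_tops_add_params]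

theorem le_medianRule {L : Proj m}
    (h : n < (Finset.univ.filter fun j => L ≤ topOf (prof j)).card +
      (Finset.univ.filter fun k => L ≤ β k).card) :
    L ≤ medianRule β prof := by
  refine Multiset.le_getD_sort_of_card_le_add_countP _ _ ?_ ?_ <;>
    simp only [countP_tops_add_params, Multiset.card_add, Multiset.card_map,
      Finset.card_val, Finset.card_univ, Fintype.card_fin] <;> omega

end MedianRule

/-- For a median rule `φ`, a single-peaked profile, a voter `i`, and
`r = |{j : top_j ⊴ top_i}|`: if the interval `[β_{n−r}, β_{n−r+1}]` meets the upper
contour set `U(≻_i(κ), ≻_i)` of the `κ`-th ranked project of voter `i`, then the outcome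
of the median rule lies in `U(≻_i(κ), ≻_i)`. -/
theorem stmt_19 {n m : ℕ}
    (β : Fin (n + 1) → Proj m)
    (hβmono : Monotone β)
    (prof : Fin n → Pref m)
    (hsp : ∀ i, SinglePeaked (prof i))
    (i : Fin n) (κ : ℕ) (hκm : κ ≤ m + 1)
    (r : ℕ)
    (hr : r = (Finset.univ.filter fun j => topOf (prof j) ≤ topOf (prof i)).card)
    (hr1 : 1 ≤ r) (hrn : r ≤ n)
    (p : Proj m)
    (hp1 : β ⟨n - r, by omega⟩ ≤ p)
    (hp2 : p ≤ β ⟨n - r + 1, by omega⟩)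
    (hpU : prof i p ≤ prof i ((prof i).symm ⟨κ - 1, by omega⟩)) :
    prof i (medianRule β prof) ≤ prof i ((prof i).symm ⟨κ - 1, by omega⟩) := by
  have htops := Fintype.card_lt_card_filter_le_add_card_filter_ge (fun j => topOf (prof j)) i
  rw [Fintype.card_fin, ← hr] at htops
  set t := topOf (prof i)
  have hle : medianRule β prof ≤ t ⊔ p := by
    apply medianRule_le
    have h₁ : r ≤ (Finset.univ.filter fun j => topOf (prof j) ≤ t ⊔ p).card :=
      hr ▸ Finset.card_le_card (Finset.monotone_filter_right _ fun _ _ => le_sup_of_le_left)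
    have h₂ : n - r + 1 ≤ (Finset.univ.filter fun k => β k ≤ t ⊔ p).card :=
      hβmono.val_add_one_le_card_filter_le ⟨n - r, by omega⟩ (hp1.trans le_sup_right)
    omega
  have hge : t ⊓ p ≤ medianRule β prof := by
    apply le_medianRule
    have h₁ : (Finset.univ.filter fun j => t ≤ topOf (prof j)).card ≤
        (Finset.univ.filter fun j => t ⊓ p ≤ topOf (prof j)).card :=
      Finset.card_le_card (Finset.monotone_filter_right _ fun _ _ => inf_le_of_left_le)
    have h₂ : n + 1 - (n - r + 1) ≤ (Finset.univ.filter fun k => t ⊓ p ≤ β k).card :=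
      hβmono.sub_val_le_card_filter_ge ⟨n - r + 1, by omega⟩ (inf_le_right.trans hp2)
    omega
  exact ((hsp i).apply_le_of_mem_uIcc ⟨hge, hle⟩).trans hpU
end
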